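/- Let X ~ N(0, σ²) with σ > 0 and let ε ∈ (0,1). Then CVaR_ε[-|X|] = κ·σ, where κ = (1/(1-ε))·√(2/π)·(exp(-(erf⁻¹(ε-1))²) - 1); equivalently, if t is the unique real with erf(t) = ε - 1, then CVaR_ε[-|X|] = (1/(1-ε))·√(2/π)·σ·(exp(-t²) - 1). -/

import Mathlib

open MeasureTheory ProbabilityTheory

/-- The Gaussian measure on ℝ with mean `μ` and standard deviation `σ`. -/
noncomputable def gaussMeas (μ σ : ℝ) : Measure ℝ :=
  gaussianReal μ ⟨σ ^ 2, sq_nonneg σ⟩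

/-- The Gauss error function `erf(t) = (2/√π)·∫₀ᵗ exp(-s²) ds`. -/
noncomputable def erf (t : ℝ) : ℝ :=
  (2 / Real.sqrt Real.pi) * ∫ s in (0 : ℝ)..t, Real.exp (-s ^ 2)

/-- The conditional value-at-risk of a function `Y` of a random variable with law `P`,
at level `ε`, given that `k` is the value-at-risk `VaR_ε[Y]`:
`CVaR_ε[Y] = (1/(1-ε))·E[Y·1{Y ≥ k}]`. -/
noncomputable def cvar (P : Measure ℝ) (ε : ℝ) (Y : ℝ → ℝ) (k : ℝ) : ℝ :=
  (1 / (1 - ε)) * ∫ x in {x | k ≤ Y x}, Y x ∂P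

/-! `-|X| ≥ k` is the event `|X| ≤ -k`, so the value-at-risk condition reads
`P(|X| < -k) = 1 - ε`, i.e. `erf (-k / (σ√2)) = 1 - ε`; as `erf` is odd and injective, `k = σ√2·t`.
The tail expectation `E[-|X|; |X| ≤ -k] = -2 ∫₀^{-k} x φ(x) dx` is explicit because the Gaussian
density satisfies `x φ(x) = -σ² φ'(x)`. -/

open Real Set
open scoped NNReal

theorem erf_neg (t : ℝ) : erf (-t) = -erf t := by
  have h := intervalIntegral.integral_comp_neg (a := 0) (b := t) fun s => exp (-s ^ 2)
  simp only [neg_sq, neg_zero] at h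
  rw [erf, erf, intervalIntegral.integral_symm (-t) 0, h, mul_neg]

theorem erf_strictMono : StrictMono erf := by
  intro x y hxy
  have hint (u v : ℝ) : IntervalIntegrable (fun s => exp (-s ^ 2)) volume u v :=
    (by fun_prop : Continuous fun s : ℝ => exp (-s ^ 2)).intervalIntegrable u v
  have hpos : 0 < ∫ s in x..y, exp (-s ^ 2) :=
    intervalIntegral.intervalIntegral_pos_of_pos (hint x y) (fun s => exp_pos _) hxy
  rw [erf, erf, ← intervalIntegral.integral_add_adjacent_intervals (hint 0 x) (hint x y)]
  exact mul_lt_mul_of_pos_left (lt_add_of_pos_right _ hpos) (by positivity)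

theorem intervalIntegral.integral_neg_self_of_even {E : Type*} [NormedAddCommGroup E]
    [NormedSpace ℝ E] {f : ℝ → E} (hf : Function.Even f) {a : ℝ}
    (hint : IntervalIntegrable f volume (-a) a) :
    ∫ x in (-a)..a, f x = (2 : ℝ) • ∫ x in 0..a, f x := by
  have hreflect : ∫ x in (-a)..0, f x = ∫ x in 0..a, f x := by
    simpa [hf _] using (intervalIntegral.integral_comp_neg (a := 0) (b := a) f).symm
  rw [← intervalIntegral.integral_add_adjacent_intervals (b := 0)
    (hint.mono_set (by simp [uIcc_subset_uIcc_iff_le, le_total, or_comm]))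
    (hint.mono_set (by simp [uIcc_subset_uIcc_iff_le, le_total, or_comm])),
    hreflect, two_smul]

theorem erf_eq_integral_neg_self (b : ℝ) : erf b = (√π)⁻¹ * ∫ s in (-b)..b, exp (-s ^ 2) := by
  have hcont : Continuous fun s : ℝ => exp (-s ^ 2) := by fun_prop
  rw [intervalIntegral.integral_neg_self_of_even (fun s => by simp only [neg_sq])
    (hcont.intervalIntegrable _ _), erf, smul_eq_mul]
  ring

namespace ProbabilityTheory

theorem hasDerivAt_gaussianPDFReal (μ : ℝ) (v : ℝ≥0) (x : ℝ) :
    HasDerivAt (gaussianPDFReal μ v) (-((x - μ) / v) * gaussianPDFReal μ v x) x := by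
  have hexponent : HasDerivAt (fun y => -(y - μ) ^ 2 / (2 * v)) (-((x - μ) / v)) x := by
    refine ((((hasDerivAt_id' x).sub_const μ).pow 2).neg.div_const (2 * (v : ℝ))).congr_deriv ?_
    ring
  refine (hexponent.exp.const_mul (√(2 * π * v))⁻¹).congr_deriv ?_
  rw [gaussianPDFReal]
  ring

theorem continuous_gaussianPDFReal (μ : ℝ) (v : ℝ≥0) : Continuous (gaussianPDFReal μ v) :=
  continuous_iff_continuousAt.2 fun x => (hasDerivAt_gaussianPDFReal μ v x).continuousAt

theorem integral_sub_mul_gaussianPDFReal (μ : ℝ) {v : ℝ≥0} (hv : v ≠ 0) (a b : ℝ) :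
    ∫ x in a..b, (x - μ) * gaussianPDFReal μ v x
      = v * (gaussianPDFReal μ v a - gaussianPDFReal μ v b) := by
  have hderiv (x : ℝ) : HasDerivAt (fun y => -(v : ℝ) * gaussianPDFReal μ v y)
      ((x - μ) * gaussianPDFReal μ v x) x := by
    refine ((hasDerivAt_gaussianPDFReal μ v x).const_mul (-(v : ℝ))).congr_deriv ?_
    field_simp
  have hcont : Continuous fun x => (x - μ) * gaussianPDFReal μ v x :=
    (continuous_id.sub continuous_const).mul (continuous_gaussianPDFReal μ v)
  rw [intervalIntegral.integral_eq_sub_of_hasDerivAt (fun x _ => hderiv x)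
    (hcont.intervalIntegrable a b)]
  ring

theorem setIntegral_gaussianReal_eq_setIntegral_smul {E : Type*} [NormedAddCommGroup E]
    [NormedSpace ℝ E] (μ : ℝ) {v : ℝ≥0} (hv : v ≠ 0) (f : ℝ → E) (s : Set ℝ) :
    ∫ x in s, f x ∂gaussianReal μ v = ∫ x in s, gaussianPDFReal μ v x • f x := by
  rw [gaussianReal_of_var_ne_zero _ hv, setIntegral_withDensity_eq_setIntegral_toReal_smul' s
    (measurable_gaussianPDF μ v) (ae_of_all _ fun _ => gaussianPDF_lt_top)]
  simp only [toReal_gaussianPDF]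

end ProbabilityTheory

theorem gaussianPDFReal_zero_eq_of_coe_eq_sq {v : ℝ≥0} {σ : ℝ} (hσ : 0 < σ)
    (hv : (v : ℝ) = σ ^ 2) (x : ℝ) :
    gaussianPDFReal 0 v x = (σ * √2 * √π)⁻¹ * exp (-(x / (σ * √2)) ^ 2) := by
  have hsqrt : √(2 * π * σ ^ 2) = σ * √2 * √π := by
    rw [sqrt_mul (by positivity), sqrt_mul zero_le_two, sqrt_sq hσ.le]
    ring
  rw [gaussianPDFReal, hv, hsqrt, sub_zero, div_pow, mul_pow, sq_sqrt zero_le_two]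
  ring_nf

theorem gaussMeas_eq_gaussianReal (μ σ : ℝ) :
    ∃ v : ℝ≥0, (v : ℝ) = σ ^ 2 ∧ gaussMeas μ σ = gaussianReal μ v :=
  ⟨_, rfl, rfl⟩

instance (μ σ : ℝ) : IsProbabilityMeasure (gaussMeas μ σ) := by
  obtain ⟨v, -, hP⟩ := gaussMeas_eq_gaussianReal μ σ
  rw [hP]
  infer_instance

theorem gaussMeas_real_Ioo_neg_self {σ : ℝ} (hσ : 0 < σ) {a : ℝ} (ha : 0 ≤ a) :
    (gaussMeas 0 σ).real (Ioo (-a) a) = erf (a / (σ * √2)) := by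
  obtain ⟨v, hvσ, hP⟩ := gaussMeas_eq_gaussianReal 0 σ
  have hv : v ≠ 0 := NNReal.coe_ne_zero.mp (hvσ ▸ (pow_pos hσ 2).ne')
  rw [measureReal_def, hP, gaussianReal_apply_eq_integral _ hv,
    ENNReal.toReal_ofReal (integral_nonneg fun x => gaussianPDFReal_nonneg _ _ x),
    ← integral_Ioc_eq_integral_Ioo, ← intervalIntegral.integral_of_le (by linarith)]
  simp_rw [gaussianPDFReal_zero_eq_of_coe_eq_sq hσ hvσ]
  rw [intervalIntegral.integral_const_mul,
    intervalIntegral.integral_comp_div (fun s => exp (-s ^ 2)) (by positivity),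
    erf_eq_integral_neg_self, neg_div, smul_eq_mul]
  field_simp

theorem setIntegral_gaussMeas_neg_abs_Icc {σ : ℝ} (hσ : 0 < σ) {a : ℝ} (ha : 0 ≤ a) :
    ∫ x in Icc (-a) a, -|x| ∂gaussMeas 0 σ = √(2 / π) * σ * (exp (-(a / (σ * √2)) ^ 2) - 1) := by
  obtain ⟨v, hvσ, hP⟩ := gaussMeas_eq_gaussianReal 0 σ
  have hv : v ≠ 0 := NNReal.coe_ne_zero.mp (hvσ ▸ (pow_pos hσ 2).ne')
  have heven : Function.Even fun x => gaussianPDFReal 0 v x • -|x| := by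
    intro x
    simp [gaussianPDFReal]
  have hhalf : ∫ x in 0..a, gaussianPDFReal 0 v x • -|x|
      = -∫ x in 0..a, (x - 0) * gaussianPDFReal 0 v x := by
    rw [← intervalIntegral.integral_neg]
    refine intervalIntegral.integral_congr fun x hx => ?_
    rw [uIcc_of_le ha] at hx
    simp [abs_of_nonneg hx.1, mul_comm]
  rw [hP, setIntegral_gaussianReal_eq_setIntegral_smul _ hv, integral_Icc_eq_integral_Ioc,
    ← intervalIntegral.integral_of_le (by linarith),
    intervalIntegral.integral_neg_self_of_even heven
      (((continuous_gaussianPDFReal _ _).smul continuous_abs.neg).intervalIntegrable _ _), hhalf,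
    integral_sub_mul_gaussianPDFReal 0 hv, gaussianPDFReal_zero_eq_of_coe_eq_sq hσ hvσ,
    gaussianPDFReal_zero_eq_of_coe_eq_sq hσ hvσ, hvσ, sqrt_div' _ pi_pos.le, zero_div,
    zero_pow two_ne_zero, neg_zero, exp_zero, smul_eq_mul]
  have h2 : √2 ^ 2 = 2 := sq_sqrt zero_le_two
  generalize exp (-(a / (σ * √2)) ^ 2) = e
  field_simp
  linear_combination (1 - e) * h2

/-- For `X ~ N(0, σ²)` with `σ > 0` and `ε ∈ (0,1)`, one has `CVaR_ε[-|X|] = κ·σ`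
with `κ = (1/(1-ε))·√(2/π)·(exp(-(erf⁻¹(ε-1))²) - 1)`: if `t` is the unique real with
`erf t = ε - 1` and `k = VaR_ε[-|X|]`, then
`CVaR_ε[-|X|] = (1/(1-ε))·√(2/π)·σ·(exp(-t²) - 1)`. -/
theorem cvar_neg_abs_centered_eq
    (σ ε k t : ℝ) (hσ : 0 < σ) (hε : ε ∈ Set.Ioo (0 : ℝ) 1)
    (hk : gaussMeas 0 σ {x | -|x| ≤ k} = ENNReal.ofReal ε)
    (ht : erf t = ε - 1) :
    cvar (gaussMeas 0 σ) ε (fun x => -|x|) k =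
      (1 / (1 - ε)) * Real.sqrt (2 / Real.pi) * σ * (Real.exp (-t ^ 2) - 1) := by
  obtain ⟨hε0, hε1⟩ := hε
  have hVaR : (gaussMeas 0 σ).real {x | -|x| ≤ k} = ε := by
    rw [measureReal_def, hk, ENNReal.toReal_ofReal hε0.le]
  have hk0 : k < 0 := by
    by_contra! hk0
    have huniv : {x : ℝ | -|x| ≤ k} = univ :=
      eq_univ_of_forall fun x => (neg_nonpos.2 (abs_nonneg x)).trans hk0
    rw [huniv, probReal_univ] at hVaR
    exact hε1.ne hVaR.symm
  have hbelow : {x : ℝ | -|x| ≤ k}ᶜ = Ioo (-(-k)) (-k) := by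
    ext x
    simp only [mem_compl_iff, mem_ofPred_eq, not_le, lt_neg, abs_lt, mem_Ioo]
  have habove : {x : ℝ | k ≤ -|x|} = Icc (-(-k)) (-k) := by
    ext x
    simp only [mem_ofPred_eq, le_neg, abs_le, mem_Icc]
  have herf : erf (-k / (σ * √2)) = 1 - ε := by
    rw [← gaussMeas_real_Ioo_neg_self hσ (by linarith), ← hbelow,
      probReal_compl_eq_one_sub (measurableSet_le (by fun_prop) (by fun_prop)), hVaR]
  have htk : t = k / (σ * √2) :=
    erf_strictMono.injective (by rw [ht, ← neg_neg (k / _), erf_neg, ← neg_div, herf]; ring)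
  rw [cvar, habove, setIntegral_gaussMeas_neg_abs_Icc hσ (by linarith), htk, neg_div, neg_sq]
  ring
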